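/- arXiv:1306.1257 — 3 statements merged into one kernel-verified Lean document; each statement's English description precedes it below -/
import Mathlib

section
/- Let S be a Steiner triple system of order n with n > 3. Then (1/3)·C(n,2) ≤ α(S) ≤ β(S) ≤ α(S) + (1/3)·C(n,2) ≤ C(n,3), where C(n,k) denotes the binomial coefficient. -/
set_option linter.unusedSectionVars false
set_option linter.unusedVariables false
set_option maxHeartbeats 1000000


/-- A Steiner quasigroup structure on `X`. -/
def IsSteinerQuasigroup {X : Type*} (star : X → X → X) : Prop :=
  (∀ a, star a a = a) ∧ (∀ a b, star a b = star b a) ∧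
    (∀ a b, star a (star a b) = b)

/-- The blocks of the Steiner triple system associated to a Steiner quasigroup:
the 3-element subsets `{a,b,c}` with `a,b,c` distinct and `a ⋆ b = c`. -/
def blocksOf {X : Type*} [DecidableEq X] (star : X → X → X) : Set (Finset X) :=
  {B | ∃ a b c : X, a ≠ b ∧ a ≠ c ∧ b ≠ c ∧ B = {a, b, c} ∧ star a b = c}

/-- `A(S) = {{a⋆b, b⋆c, c⋆a} : a,b,c pairwise distinct, {a,b,c} ∉ S}`. -/
def ASet {X : Type*} [DecidableEq X] (star : X → X → X) : Set (Finset X) :=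
  {B | ∃ a b c : X, a ≠ b ∧ a ≠ c ∧ b ≠ c ∧
    ({a, b, c} : Finset X) ∉ blocksOf star ∧
    B = {star a b, star b c, star c a}}

/-- `B(S) = {{a⋆b, b⋆c, c⋆a} : a,b,c pairwise distinct}`. -/
def BSet {X : Type*} [DecidableEq X] (star : X → X → X) : Set (Finset X) :=
  {B | ∃ a b c : X, a ≠ b ∧ a ≠ c ∧ b ≠ c ∧
    B = {star a b, star b c, star c a}}

/-- `α(S) = |A(S)|`. -/
noncomputable def alphaInv {X : Type*} [DecidableEq X] (star : X → X → X) : ℕ :=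
  (ASet star).ncard

/-- `β(S) = |B(S)|`. -/
noncomputable def betaInv {X : Type*} [DecidableEq X] (star : X → X → X) : ℕ :=
  (BSet star).ncard

/-- A pasch configuration: four blocks `{a,b,c}, {a,d,e}, {f,b,d}, {f,c,e}`
with `a,b,c,d,e,f` pairwise distinct. -/
def IsPasch {X : Type*} [DecidableEq X] (P : Set (Finset X)) : Prop :=
  ∃ a b c d e f : X, ([a, b, c, d, e, f] : List X).Pairwise (· ≠ ·) ∧
    P = {({a, b, c} : Finset X), {a, d, e}, {f, b, d}, {f, c, e}}

/-- A Steiner triple system is anti-pasch if it contains no pasch configuration. -/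
def IsAntiPasch {X : Type*} [DecidableEq X] (star : X → X → X) : Prop :=
  ∀ P : Set (Finset X), IsPasch P → ¬ P ⊆ blocksOf star


section SqHelpers
variable {X : Type*} [DecidableEq X] {star : X → X → X}

lemma sq_all (hq : IsSteinerQuasigroup star) {a b c : X} (h : star a b = c) :
    star b a = c ∧ star b c = a ∧ star c b = a ∧ star c a = b ∧ star a c = b := by
  obtain ⟨hi, hc, hl⟩ := hq
  have r : ∀ x y z : X, star x y = z → star y z = x := by
    intro x y z hxy
    rw [← hxy, hc x y, hl]
  have h1 := r _ _ _ h
  have h2 := r _ _ _ h1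
  exact ⟨by rw [hc]; exact h, h1, by rw [hc]; exact h1, h2, by rw [hc]; exact h2⟩

lemma sq_ne_fst (hq : IsSteinerQuasigroup star) {a b : X} (h : a ≠ b) : star a b ≠ a := by
  intro he
  have h2 : star a a = b := (sq_all hq he).2.2.2.1
  exact h ((hq.1 a).symm.trans h2)

lemma sq_ne_snd (hq : IsSteinerQuasigroup star) {a b : X} (h : a ≠ b) : star a b ≠ b := by
  intro he
  have h2 : star b b = a := (sq_all hq he).2.1
  exact h ((hq.1 b).symm.trans h2).symm

lemma sq_img_ne (hq : IsSteinerQuasigroup star) {x y z : X} (hxz : x ≠ z) :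
    star x y ≠ star y z := by
  intro he
  have h1 : star y (star x y) = x := (sq_all hq (rfl : star x y = star x y)).2.1
  have h2 : star y (star y z) = z := hq.2.2 y z
  rw [he] at h1
  exact hxz (h1.symm.trans h2)

lemma sq_card_img (hq : IsSteinerQuasigroup star) {x y z : X}
    (hxy : x ≠ y) (hxz : x ≠ z) (hyz : y ≠ z) :
    ({star x y, star y z, star z x} : Finset X).card = 3 := by
  have d1 : star x y ≠ star y z := sq_img_ne hq hxz
  have d3 : star y z ≠ star z x := sq_img_ne hq hxy.symm
  have d2 : star x y ≠ star z x := by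
    intro he
    have : star y x ≠ star x z := sq_img_ne hq hyz
    rw [hq.2.1 y x, hq.2.1 x z] at this
    exact this he
  exact Finset.card_eq_three.mpr ⟨_, _, _, d1, d2, d3, rfl⟩

lemma mem_blocksOf_iff (hq : IsSteinerQuasigroup star) {a b c : X}
    (hab : a ≠ b) (hac : a ≠ c) (hbc : b ≠ c) :
    ({a, b, c} : Finset X) ∈ blocksOf star ↔ star a b = c := by
  constructor
  · rintro ⟨a', b', c', h1, h2, h3, hset, hm⟩
    obtain ⟨e1, e2, e3, e4, e5⟩ := sq_all hq hm
    have Ha : a = a' ∨ a = b' ∨ a = c' := by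
      have : a ∈ ({a', b', c'} : Finset X) := by rw [← hset]; simp
      simpa using this
    have Hb : b = a' ∨ b = b' ∨ b = c' := by
      have : b ∈ ({a', b', c'} : Finset X) := by rw [← hset]; simp
      simpa using this
    have Hc : c = a' ∨ c = b' ∨ c = c' := by
      have : c ∈ ({a', b', c'} : Finset X) := by rw [← hset]; simp
      simpa using this
    rcases Ha with rfl | rfl | rfl <;> rcases Hb with rfl | rfl | rfl <;>
      rcases Hc with rfl | rfl | rfl <;> simp_all
  · intro h
    exact ⟨a, b, c, hab, hac, hbc, rfl, h⟩

lemma sq_block_card (hq : IsSteinerQuasigroup star) {T : Finset X}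
    (hT : T ∈ blocksOf star) : T.card = 3 := by
  obtain ⟨a, b, c, h1, h2, h3, rfl, -⟩ := hT
  exact Finset.card_eq_three.mpr ⟨a, b, c, h1, h2, h3, rfl⟩

lemma sq_block_pair (hq : IsSteinerQuasigroup star) {T : Finset X}
    (hT : T ∈ blocksOf star) {u v : X} (hu : u ∈ T) (hv : v ∈ T) (huv : u ≠ v) :
    T = {u, v, star u v} := by
  have hc3 : T.card = 3 := sq_block_card hq hT
  obtain ⟨a, b, c, h1, h2, h3, rfl, hm⟩ := hT
  obtain ⟨e1, e2, e3, e4, e5⟩ := sq_all hq hm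
  have hw : star u v ∈ ({a, b, c} : Finset X) := by
    simp only [Finset.mem_insert, Finset.mem_singleton] at hu hv
    rcases hu with rfl | rfl | rfl <;> rcases hv with rfl | rfl | rfl <;> simp_all
  have hsub : ({u, v, star u v} : Finset X) ⊆ {a, b, c} := by
    intro x hx
    simp only [Finset.mem_insert, Finset.mem_singleton] at hx
    rcases hx with rfl | rfl | rfl
    · exact hu
    · exact hv
    · exact hw
  have hcuv : ({u, v, star u v} : Finset X).card = 3 :=
    Finset.card_eq_three.mpr ⟨u, v, star u v, huv,
      (sq_ne_fst hq huv).symm, (sq_ne_snd hq huv).symm, rfl⟩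
  exact (Finset.eq_of_subset_of_card_le hsub (by omega)).symm

lemma card_triple_le (a b c : X) : ({a, b, c} : Finset X).card ≤ 3 :=
  (Finset.card_insert_le _ _).trans (Nat.succ_le_succ
    ((Finset.card_insert_le _ _).trans (by simp)))

lemma sq_offDiag_image (hcomm : ∀ a b, star a b = star b a) {x y z : X}
    (hxy : x ≠ y) (hxz : x ≠ z) (hyz : y ≠ z) :
    (({x, y, z} : Finset X).offDiag.image fun p => star p.1 p.2) =
      {star x y, star y z, star z x} := by
  ext u
  simp only [Finset.mem_image, Finset.mem_offDiag, Finset.mem_insert,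
    Finset.mem_singleton, Prod.exists]
  constructor
  · rintro ⟨a, b, ⟨ha, hb, hab⟩, rfl⟩
    rcases ha with rfl | rfl | rfl <;> rcases hb with rfl | rfl | rfl <;>
      simp_all [hcomm]
  · rintro (rfl | rfl | rfl)
    · exact ⟨x, y, ⟨Or.inl rfl, Or.inr (Or.inl rfl), hxy⟩, rfl⟩
    · exact ⟨y, z, ⟨Or.inr (Or.inl rfl), Or.inr (Or.inr rfl), hyz⟩, rfl⟩
    · exact ⟨z, x, ⟨Or.inr (Or.inr rfl), Or.inl rfl, hxz.symm⟩, rfl⟩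

end SqHelpers

/-- `(1/3)·C(n,2) ≤ α(S) ≤ β(S) ≤ α(S) + (1/3)·C(n,2) ≤ C(n,3)`
(all stated multiplied by 3 to stay in ℕ). -/
theorem stmt3 {X : Type*} [Fintype X] [DecidableEq X]
    (star : X → X → X) (hq : IsSteinerQuasigroup star)
    (n : ℕ) (hcard : Fintype.card X = n) (hn : 3 < n) :
    n.choose 2 ≤ 3 * alphaInv star ∧
      alphaInv star ≤ betaInv star ∧
      3 * betaInv star ≤ 3 * alphaInv star + n.choose 2 ∧
      3 * alphaInv star + n.choose 2 ≤ 3 * n.choose 3 := by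
  classical
  have hAfin : (ASet star).Finite := Set.toFinite _
  have hBfin : (BSet star).Finite := Set.toFinite _
  have hSfin : (blocksOf star).Finite := Set.toFinite _
  set AF := hAfin.toFinset with hAFdef
  set BF := hBfin.toFinset with hBFdef
  set SF := hSfin.toFinset with hSFdef
  have hAcard : alphaInv star = AF.card := Set.ncard_eq_toFinset_card _ hAfin
  have hBcard : betaInv star = BF.card := Set.ncard_eq_toFinset_card _ hBfin
  have hmemA : ∀ T, T ∈ AF ↔ T ∈ ASet star := fun T => Set.Finite.mem_toFinset _
  have hmemB : ∀ T, T ∈ BF ↔ T ∈ BSet star := fun T => Set.Finite.mem_toFinset _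
  have hmemS : ∀ T, T ∈ SF ↔ T ∈ blocksOf star := fun T => Set.Finite.mem_toFinset _
  -- counting blocks: n.choose 2 = 3 * SF.card
  have hpairs_card : (Finset.univ.powersetCard 2 : Finset (Finset X)).card = n.choose 2 := by
    rw [Finset.card_powersetCard, Finset.card_univ, hcard]
  have hcover : (Finset.univ.powersetCard 2 : Finset (Finset X)) =
      SF.biUnion (fun T => T.powersetCard 2) := by
    apply Finset.ext
    intro p
    simp only [Finset.mem_biUnion, Finset.mem_powersetCard]
    constructor
    · rintro ⟨-, hp2⟩
      obtain ⟨u, v, huv, rfl⟩ := Finset.card_eq_two.mp hp2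
      refine ⟨{u, v, star u v}, (hmemS _).mpr
        ⟨u, v, star u v, huv, (sq_ne_fst hq huv).symm, (sq_ne_snd hq huv).symm, rfl, rfl⟩,
        ?_, hp2⟩
      intro x hx
      simp only [Finset.mem_insert, Finset.mem_singleton] at hx ⊢
      tauto
    · rintro ⟨T, hT, hpT, hp2⟩
      exact ⟨fun x _ => Finset.mem_univ x, hp2⟩
  have hdisj : ∀ T ∈ SF, ∀ T' ∈ SF, T ≠ T' →
      Disjoint (T.powersetCard 2) (T'.powersetCard 2) := by
    intro T hT T' hT' hne
    rw [Finset.disjoint_left]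
    intro p hp hp'
    rw [Finset.mem_powersetCard] at hp hp'
    obtain ⟨u, v, huv, rfl⟩ := Finset.card_eq_two.mp hp.2
    have h1 := sq_block_pair hq ((hmemS T).mp hT)
      (hp.1 (Finset.mem_insert_self u {v})) (hp.1 (by simp)) huv
    have h2 := sq_block_pair hq ((hmemS T').mp hT')
      (hp'.1 (Finset.mem_insert_self u {v})) (hp'.1 (by simp)) huv
    exact hne (h1.trans h2.symm)
  have hSFcount : n.choose 2 = 3 * SF.card := by
    rw [← hpairs_card, hcover, Finset.card_biUnion hdisj]
    rw [Finset.sum_congr rfl (fun T hT => ?_), Finset.sum_const, smul_eq_mul, mul_comm]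
    rw [Finset.card_powersetCard, sq_block_card hq ((hmemS T).mp hT)]
    decide
  -- lower bound: every pair is covered by an element of AF
  have hAcard3 : ∀ T ∈ AF, T.card = 3 := by
    intro T hT
    obtain ⟨x, y, z, h1, h2, h3, -, rfl⟩ := (hmemA T).mp hT
    exact sq_card_img hq h1 h2 h3
  have hlower : n.choose 2 ≤ 3 * AF.card := by
    have hsub : (Finset.univ.powersetCard 2 : Finset (Finset X)) ⊆
        AF.biUnion (fun T => T.powersetCard 2) := by
      intro p hp
      rw [Finset.mem_powersetCard] at hp
      obtain ⟨u, v, huv, rfl⟩ := Finset.card_eq_two.mp hp.2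
      obtain ⟨d, hd⟩ : ∃ d, d ∉ ({u, v, star u v} : Finset X) := by
        by_contra hco
        push_neg at hco
        have h1 : (Finset.univ : Finset X) ⊆ {u, v, star u v} := fun d _ => hco d
        have h2 := Finset.card_le_card h1
        rw [Finset.card_univ, hcard] at h2
        have h3 := card_triple_le u v (star u v)
        omega
      simp only [Finset.mem_insert, Finset.mem_singleton, not_or] at hd
      obtain ⟨hdu, hdv, hdw⟩ := hd
      set x := star u d with hx
      set z := star v d with hz
      have hxd : x ≠ d := sq_ne_snd hq (Ne.symm hdu)
      have hzd : z ≠ d := sq_ne_snd hq (Ne.symm hdv)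
      have hu' : star d x = u := (sq_all hq hx.symm).2.1
      have hv' : star d z = v := (sq_all hq hz.symm).2.1
      have hxz : x ≠ z := by
        intro he
        rw [← hu', he, hv'] at huv
        exact huv rfl
      have hxd' : star x d = u := by rw [hq.2.1 x d]; exact hu'
      have hnb : ({x, d, z} : Finset X) ∉ blocksOf star := by
        rw [mem_blocksOf_iff hq hxd hxz (Ne.symm hzd)]
        intro hblk
        rw [hxd'] at hblk
        -- hblk : u = z = star v d
        have : star u v = d := (sq_all hq (hz.symm.trans hblk.symm)).2.2.2.1
        exact hdw this.symm
      refine Finset.mem_biUnion.mpr ⟨{star x d, star d z, star z x},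
        (hmemA _).mpr ⟨x, d, z, hxd, hxz, Ne.symm hzd, hnb, rfl⟩, ?_⟩
      rw [Finset.mem_powersetCard]
      refine ⟨?_, hp.2⟩
      intro w hw
      simp only [Finset.mem_insert, Finset.mem_singleton] at hw ⊢
      rcases hw with rfl | rfl
      · exact Or.inl hxd'.symm
      · exact Or.inr (Or.inl hv'.symm)
    have h1 := Finset.card_le_card hsub
    have h2 := Finset.card_biUnion_le (s := AF) (t := fun T => T.powersetCard 2)
    have h3 : ∑ T ∈ AF, (T.powersetCard 2).card ≤ 3 * AF.card := by
      rw [mul_comm]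
      refine le_trans (Finset.sum_le_card_nsmul AF _ 3 ?_) (by rw [smul_eq_mul])
      intro T hT
      rw [Finset.card_powersetCard, hAcard3 T hT]
      decide
    omega
  -- AF ⊆ BF
  have hAB : AF ⊆ BF := by
    intro T hT
    obtain ⟨x, y, z, h1, h2, h3, -, h5⟩ := (hmemA T).mp hT
    exact (hmemB T).mpr ⟨x, y, z, h1, h2, h3, h5⟩
  -- BF ⊆ AF ∪ SF
  have hBAS : BF ⊆ AF ∪ SF := by
    intro T hT
    obtain ⟨x, y, z, h1, h2, h3, rfl⟩ := (hmemB T).mp hT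
    by_cases hb : ({x, y, z} : Finset X) ∈ blocksOf star
    · have hm := (mem_blocksOf_iff hq h1 h2 h3).mp hb
      obtain ⟨e1, e2, e3, e4, e5⟩ := sq_all hq hm
      have : ({star x y, star y z, star z x} : Finset X) = {x, y, z} := by
        rw [hm, e2, e4]
        ext w
        simp only [Finset.mem_insert, Finset.mem_singleton]
        tauto
      rw [this]
      exact Finset.mem_union_right _ ((hmemS _).mpr hb)
    · exact Finset.mem_union_left _ ((hmemA _).mpr ⟨x, y, z, h1, h2, h3, hb, rfl⟩)
  have hbeta_le : BF.card ≤ AF.card + SF.card :=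
    (Finset.card_le_card hBAS).trans (Finset.card_union_le _ _)
  -- final bound: AF.card + SF.card ≤ n.choose 3
  have hSsub : SF ⊆ Finset.univ.powersetCard 3 := by
    intro T hT
    rw [Finset.mem_powersetCard]
    exact ⟨fun x _ => Finset.mem_univ x, sq_block_card hq ((hmemS T).mp hT)⟩
  have hP3card : (Finset.univ.powersetCard 3 : Finset (Finset X)).card = n.choose 3 := by
    rw [Finset.card_powersetCard, Finset.card_univ, hcard]
  have hSle : SF.card ≤ n.choose 3 := hP3card ▸ Finset.card_le_card hSsub
  have hAle : AF.card ≤ n.choose 3 - SF.card := by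
    have hsurj : Set.SurjOn (fun t : Finset X => t.offDiag.image fun p => star p.1 p.2)
        ↑((Finset.univ.powersetCard 3 : Finset (Finset X)) \ SF) ↑AF := by
      intro T hT
      obtain ⟨x, y, z, h1, h2, h3, hnb, rfl⟩ := (hmemA T).mp hT
      refine ⟨{x, y, z}, ?_, sq_offDiag_image hq.2.1 h1 h2 h3⟩
      simp only [Finset.coe_sdiff, Set.mem_diff, Finset.mem_coe, Finset.mem_powersetCard]
      exact ⟨⟨fun w _ => Finset.mem_univ w, Finset.card_eq_three.mpr ⟨x, y, z, h1, h2, h3, rfl⟩⟩,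
        fun hc => hnb ((hmemS _).mp hc)⟩
    have := Finset.card_le_card_of_surjOn _ hsurj
    rwa [Finset.card_sdiff_of_subset hSsub, hP3card] at this
  refine ⟨?_, ?_, ?_, ?_⟩
  · rw [hAcard]; exact hlower
  · rw [hAcard, hBcard]; exact Finset.card_le_card hAB
  · rw [hAcard, hBcard]; omega
  · rw [hAcard]; omega
end

section
/- Let V be a finite-dimensional vector space over the field with two elements with dim V = k+1 ≥ 3, let X be the set of nonzero vectors of V (so |X| = n = 2^{k+1} − 1), and let S be the Steiner triple system on X whose blocks are the 3-sets {a, b, a+b} for distinct nonzero a, b (the projective geometry PG(k,2)). Then β(S) = (1/3)·C(n,2); that is, B(S) = S. -/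
/-- The Steiner quasigroup of the projective geometry `PG(k,2)`:
on nonzero vectors of a vector space over `F₂`, `a ⋆ b = a + b` for `a ≠ b`. -/
noncomputable def projStar {V : Type*} [AddCommGroup V] [Module (ZMod 2) V]
    [DecidableEq V] (a b : {v : V // v ≠ 0}) : {v : V // v ≠ 0} :=
  if h : a = b then a
  else
    ⟨a.1 + b.1, by
      intro h0
      apply h
      apply Subtype.ext
      have hb : (b : V) + (b : V) = 0 := by
        have h2 : (2 : ZMod 2) • (b : V) = (b : V) + (b : V) := two_smul _ _
        rw [show (2 : ZMod 2) = 0 by decide, zero_smul] at h2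
        exact h2.symm
      have ha' : (a : V) = -(b : V) := eq_neg_of_add_eq_zero_left h0
      have hnb : -(b : V) = (b : V) := neg_eq_of_add_eq_zero_left hb
      rw [ha', hnb]⟩


/-!
Every Steiner quasigroup satisfies `S ⊆ B(S)`: for a block `{a, b, c}` one has
`{a ⋆ b, b ⋆ c, c ⋆ a} = {c, a, b}`. In `PG(k,2)` the converse holds as well, since
`(a + b) + (b + c) = c + a` shows that `{a ⋆ b, b ⋆ c, c ⋆ a}` is always a block.
Hence `B(S) = S`, and `3 β(S) = C(n,2)` is the usual count of a Steiner triple system: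
every pair lies in exactly one block, and every block contains three pairs.
-/

namespace IsSteinerQuasigroup

variable {X : Type*} {star : X → X → X}

theorem star_ne_left (h : IsSteinerQuasigroup star) {a b : X} (hab : a ≠ b) :
    star a b ≠ a := fun he => hab (by rw [← h.2.2 a b, he, h.1])

theorem star_ne_right (h : IsSteinerQuasigroup star) {a b : X} (hab : a ≠ b) :
    star a b ≠ b := h.2.1 a b ▸ h.star_ne_left hab.symm

theorem card_triple [DecidableEq X] (h : IsSteinerQuasigroup star) {a b : X} (hab : a ≠ b) :
    ({a, b, star a b} : Finset X).card = 3 :=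
  Finset.card_eq_three.mpr
    ⟨a, b, star a b, hab, (h.star_ne_left hab).symm, (h.star_ne_right hab).symm, rfl⟩

theorem mem_blocksOf_iff [DecidableEq X] (h : IsSteinerQuasigroup star) {t : Finset X} :
    t ∈ blocksOf star ↔ ∃ a b, a ≠ b ∧ t = {a, b, star a b} := by
  constructor
  · rintro ⟨a, b, c, hab, -, -, rfl, rfl⟩
    exact ⟨a, b, hab, rfl⟩
  · rintro ⟨a, b, hab, rfl⟩
    exact ⟨a, b, star a b, hab, (h.star_ne_left hab).symm, (h.star_ne_right hab).symm,
      rfl, rfl⟩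

theorem star_mem_of_mem_blocksOf [DecidableEq X] (h : IsSteinerQuasigroup star)
    {t : Finset X} (ht : t ∈ blocksOf star) {x y : X} (hx : x ∈ t) (hy : y ∈ t)
    (hxy : x ≠ y) : star x y ∈ t := by
  obtain ⟨a, b, c, -, -, -, rfl, rfl⟩ := ht
  obtain ⟨idem, comm, cancel⟩ := h
  simp only [Finset.mem_insert, Finset.mem_singleton] at hx hy ⊢
  rcases hx with rfl | rfl | rfl <;> rcases hy with rfl | rfl | rfl <;> grind

theorem eq_of_mem_blocksOf [DecidableEq X] (h : IsSteinerQuasigroup star) {t : Finset X}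
    (ht : t ∈ blocksOf star) {a b : X} (ha : a ∈ t) (hb : b ∈ t) (hab : a ≠ b) :
    t = {a, b, star a b} := by
  have hsub : ({a, b, star a b} : Finset X) ⊆ t := by
    simp only [Finset.insert_subset_iff, Finset.singleton_subset_iff]
    exact ⟨ha, hb, h.star_mem_of_mem_blocksOf ht ha hb hab⟩
  refine (Finset.eq_of_subset_of_card_le hsub ?_).symm
  obtain ⟨x, y, -, rfl⟩ := h.mem_blocksOf_iff.mp ht
  exact Finset.card_le_three.trans (h.card_triple hab).ge

theorem blocksOf_subset_BSet [DecidableEq X] (h : IsSteinerQuasigroup star) :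
    blocksOf star ⊆ BSet star := by
  rintro t ⟨a, b, c, hab, hac, hbc, rfl, hc⟩
  refine ⟨a, b, c, hab, hac, hbc, ?_⟩
  have hbc' : star b c = a := by rw [← hc, h.2.1 a b, h.2.2]
  have hca : star c a = b := by rw [← hc, h.2.1, h.2.2]
  rw [hc, hbc', hca]
  ext
  simp only [Finset.mem_insert, Finset.mem_singleton]
  tauto

theorem three_mul_ncard_blocksOf [Fintype X] [DecidableEq X] (h : IsSteinerQuasigroup star) :
    3 * (blocksOf star).ncard = (Fintype.card X).choose 2 := by
  set T := (Set.toFinite (blocksOf star)).toFinset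
  have hpairs : (Finset.univ : Finset X).powersetCard 2 = T.biUnion (·.powersetCard 2) := by
    ext s
    simp only [Finset.mem_powersetCard, Finset.mem_biUnion, Set.Finite.mem_toFinset, T,
      Finset.subset_univ, true_and]
    refine ⟨fun hs => ?_, fun ⟨_, _, _, hs⟩ => hs⟩
    obtain ⟨a, b, hab, rfl⟩ := Finset.card_eq_two.mp hs
    refine ⟨{a, b, star a b}, h.mem_blocksOf_iff.mpr ⟨a, b, hab, rfl⟩, ?_, hs⟩
    exact Finset.insert_subset_insert _ (Finset.singleton_subset_iff.mpr (by simp))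
  have hdisj : (T : Set (Finset X)).PairwiseDisjoint (·.powersetCard 2) := by
    intro t₁ ht₁ t₂ ht₂ hne
    simp only [Set.Finite.coe_toFinset, T] at ht₁ ht₂
    refine Finset.disjoint_left.mpr fun s hs₁ hs₂ => hne ?_
    rw [Finset.mem_powersetCard] at hs₁ hs₂
    obtain ⟨a, b, hab, rfl⟩ := Finset.card_eq_two.mp hs₁.2
    rw [h.eq_of_mem_blocksOf ht₁ (hs₁.1 (by simp)) (hs₁.1 (by simp)) hab,
      h.eq_of_mem_blocksOf ht₂ (hs₂.1 (by simp)) (hs₂.1 (by simp)) hab]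
  have hthree : ∀ t ∈ T, (t.powersetCard 2).card = 3 := by
    intro t ht
    obtain ⟨a, b, hab, rfl⟩ := h.mem_blocksOf_iff.mp ((Set.Finite.mem_toFinset _).mp ht)
    rw [Finset.card_powersetCard, h.card_triple hab]
    rfl
  rw [← Finset.card_univ, ← Finset.card_powersetCard, hpairs, Finset.card_biUnion hdisj,
    Finset.sum_congr rfl hthree, Finset.sum_const, smul_eq_mul, mul_comm,
    Set.ncard_eq_toFinset_card _ (Set.toFinite _)]

end IsSteinerQuasigroup

theorem add_self_eq_zero_of_zmod_two {V : Type*} [AddCommGroup V] [Module (ZMod 2) V]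
    (v : V) : v + v = 0 := by
  rw [← two_smul (ZMod 2), show (2 : ZMod 2) = 0 from rfl, zero_smul]

theorem card_ne_zero_eq_two_pow_finrank_sub_one {V : Type*} [AddCommGroup V]
    [Module (ZMod 2) V] [Fintype V] [DecidableEq V] :
    Fintype.card {v : V // v ≠ 0} = 2 ^ Module.finrank (ZMod 2) V - 1 := by
  rw [Fintype.card_subtype_compl, Fintype.card_subtype_eq,
    Module.card_eq_pow_finrank (K := ZMod 2), ZMod.card]

section ProjectiveGeometry

variable {V : Type*} [AddCommGroup V] [Module (ZMod 2) V] [DecidableEq V]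

theorem projStar_val {a b : {v : V // v ≠ 0}} (hab : a ≠ b) :
    (projStar a b : V) = a + b := by
  rw [projStar, dif_neg hab]

theorem isSteinerQuasigroup_projStar : IsSteinerQuasigroup (projStar (V := V)) := by
  refine ⟨fun a => dif_pos rfl, fun a b => ?_, fun a b => ?_⟩
  · rcases eq_or_ne a b with rfl | hab
    · rfl
    · exact Subtype.ext (by rw [projStar_val hab, projStar_val hab.symm, add_comm])
  · rcases eq_or_ne a b with rfl | hab
    · simp only [projStar, dite_true]
    · have hne : a ≠ projStar a b := fun he => by
        simpa [← Subtype.coe_inj, projStar_val hab, b.2] using congrArg Subtype.val he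
      exact Subtype.ext (by
        rw [projStar_val hne, projStar_val hab, ← add_assoc, add_self_eq_zero_of_zmod_two,
          zero_add])

theorem BSet_projStar_subset_blocksOf :
    BSet (projStar (V := V)) ⊆ blocksOf projStar := by
  rintro t ⟨a, b, c, hab, hac, hbc, rfl⟩
  have hne : projStar a b ≠ projStar b c := fun he => by
    have hval := congrArg Subtype.val he
    rw [projStar_val hab, projStar_val hbc, add_comm (b : V)] at hval
    exact hac (Subtype.ext (add_right_cancel hval))
  have hsum : projStar c a = projStar (projStar a b) (projStar b c) := Subtype.ext <| by
    rw [projStar_val hac.symm, projStar_val hne, projStar_val hab, projStar_val hbc,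
      ← add_assoc, add_assoc (a : V), add_self_eq_zero_of_zmod_two, add_zero, add_comm]
  rw [hsum]
  exact isSteinerQuasigroup_projStar.mem_blocksOf_iff.mpr ⟨_, _, hne, rfl⟩

theorem BSet_projStar_eq_blocksOf : BSet (projStar (V := V)) = blocksOf projStar :=
  BSet_projStar_subset_blocksOf.antisymm isSteinerQuasigroup_projStar.blocksOf_subset_BSet

end ProjectiveGeometry

theorem stmt7_general {V : Type*} [AddCommGroup V] [Module (ZMod 2) V]
    [Fintype V] [DecidableEq V] (k : ℕ)
    (hdim : Module.finrank (ZMod 2) V = k + 1) :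
    Fintype.card {v : V // v ≠ 0} = 2 ^ (k + 1) - 1 ∧
      3 * betaInv (projStar (V := V)) =
        (Fintype.card {v : V // v ≠ 0}).choose 2 ∧
      BSet (projStar (V := V)) = blocksOf (projStar (V := V)) := by
  refine ⟨hdim ▸ card_ne_zero_eq_two_pow_finrank_sub_one, ?_, BSet_projStar_eq_blocksOf⟩
  rw [betaInv, BSet_projStar_eq_blocksOf]
  exact isSteinerQuasigroup_projStar.three_mul_ncard_blocksOf

/-- For the projective geometry `PG(k,2)` (with `k ≥ 2`), on the `n = 2^(k+1) - 1`
nonzero vectors of a `(k+1)`-dimensional `F₂`-vector space, one has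
`β(S) = (1/3)·C(n,2)`, that is, `B(S) = S`. -/
theorem stmt7 {V : Type*} [AddCommGroup V] [Module (ZMod 2) V]
    [Fintype V] [DecidableEq V] (k : ℕ) (hk : 2 ≤ k)
    (hdim : Module.finrank (ZMod 2) V = k + 1) :
    Fintype.card {v : V // v ≠ 0} = 2 ^ (k + 1) - 1 ∧
      3 * betaInv (projStar (V := V)) =
        (Fintype.card {v : V // v ≠ 0}).choose 2 ∧
      BSet (projStar (V := V)) = blocksOf (projStar (V := V)) :=
  stmt7_general k hdim
end

section
/- Let S be a Steiner triple system of order n. Then β(S) = α(S) + (1/3)·C(n,2) if and only if S is anti-pasch (i.e., S contains no pasch configuration). -/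
set_option linter.unusedSectionVars false
set_option linter.unusedVariables false

section
variable {X : Type*} [DecidableEq X] {star : X → X → X}
variable (h1 : ∀ a, star a a = a) (h2 : ∀ a b, star a b = star b a)
  (h3 : ∀ a b, star a (star a b) = b)

include h1 h2 h3

lemma star_ne_left {a b : X} (h : a ≠ b) : star a b ≠ a := by
  intro he
  have := h3 a b
  rw [he, h1 a] at this
  exact h this

lemma star_ne_right {a b : X} (h : a ≠ b) : star a b ≠ b := by
  intro he
  rw [h2] at he
  exact star_ne_left h1 h2 h3 (Ne.symm h) he

lemma block_closed {B : Finset X} (hB : B ∈ blocksOf star) {a b : X}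
    (ha : a ∈ B) (hb : b ∈ B) (hab : a ≠ b) : star a b ∈ B := by
  obtain ⟨p, q, r, hpq, hpr, hqr, rfl, hm⟩ := hB
  have hqp : star q p = r := by rw [h2]; exact hm
  have hpr' : star p r = q := by rw [← hm]; exact h3 p q
  have hrp : star r p = q := by rw [h2]; exact hpr'
  have hqr' : star q r = p := by rw [← hqp]; exact h3 q p
  have hrq : star r q = p := by rw [h2]; exact hqr'
  simp only [Finset.mem_insert, Finset.mem_singleton] at ha hb ⊢
  rcases ha with rfl | rfl | rfl <;> rcases hb with rfl | rfl | rfl <;>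
    simp_all [h1]

lemma block_op {a b c : X} (hab : a ≠ b) (hac : a ≠ c) (hbc : b ≠ c)
    (h : ({a, b, c} : Finset X) ∈ blocksOf star) : star a b = c := by
  have hmem : star a b ∈ ({a, b, c} : Finset X) :=
    block_closed h1 h2 h3 h (by simp) (by simp) hab
  simp only [Finset.mem_insert, Finset.mem_singleton] at hmem
  rcases hmem with he | he | he
  · exact absurd he (star_ne_left h1 h2 h3 hab)
  · exact absurd he (star_ne_right h1 h2 h3 hab)
  · exact he

lemma blocks_card {B : Finset X} (hB : B ∈ blocksOf star) : B.card = 3 := by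
  obtain ⟨p, q, r, hpq, hpr, hqr, rfl, hm⟩ := hB
  rw [Finset.card_insert_of_notMem (by simp [hpq, hpr]),
    Finset.card_insert_of_notMem (by simp [hqr]), Finset.card_singleton]

lemma count_blocks [Fintype X] :
    3 * (blocksOf star).ncard = (Fintype.card X).choose 2 := by
  classical
  set Bl := (Set.toFinite (blocksOf star)).toFinset with hBl
  have hmemBl : ∀ B, B ∈ Bl ↔ B ∈ blocksOf star := fun B => Set.Finite.mem_toFinset _
  set f : Finset X → Finset X := fun P =>
    P ∪ Finset.univ.filter (fun x => ∃ a ∈ P, ∃ b ∈ P, a ≠ b ∧ star a b = x) with hfdef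
  have hfval : ∀ a b : X, a ≠ b → f {a, b} = {a, b, star a b} := by
    intro a b hab
    ext x
    simp only [hfdef, Finset.mem_union, Finset.mem_filter, Finset.mem_univ, true_and,
      Finset.mem_insert, Finset.mem_singleton]
    constructor
    · rintro ((h | h) | ⟨p, hp, q, hq, hpq, rfl⟩)
      · tauto
      · tauto
      · rcases hp with rfl | rfl <;> rcases hq with rfl | rfl <;> simp_all [h2]
    · rintro (rfl | rfl | rfl)
      · tauto
      · tauto
      · exact Or.inr ⟨a, Or.inl rfl, b, Or.inr rfl, hab, rfl⟩
  have hf : ∀ P ∈ Finset.univ.powersetCard 2, f P ∈ Bl := by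
    intro P hP
    rw [Finset.mem_powersetCard] at hP
    obtain ⟨a, b, hab, rfl⟩ := Finset.card_eq_two.mp hP.2
    rw [hfval a b hab, hmemBl]
    exact ⟨a, b, star a b, hab, (star_ne_left h1 h2 h3 hab).symm,
      (star_ne_right h1 h2 h3 hab).symm, rfl, rfl⟩
  have key : ∀ B ∈ Bl, (Finset.univ.powersetCard 2).filter (fun P => f P = B)
      = B.powersetCard 2 := by
    intro B hB
    have hBblock := (hmemBl B).mp hB
    ext P
    simp only [Finset.mem_filter, Finset.mem_powersetCard, Finset.subset_univ, true_and]
    constructor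
    · rintro ⟨hc, rfl⟩
      exact ⟨Finset.subset_union_left, hc⟩
    · rintro ⟨hsub, hc⟩
      obtain ⟨a, b, hab, rfl⟩ := Finset.card_eq_two.mp hc
      have ha : a ∈ B := hsub (by simp)
      have hb : b ∈ B := hsub (by simp)
      refine ⟨hc, ?_⟩
      rw [hfval a b hab]
      have hsub2 : ({a, b, star a b} : Finset X) ⊆ B := by
        intro x hx
        simp only [Finset.mem_insert, Finset.mem_singleton] at hx
        rcases hx with rfl | rfl | rfl
        · exact ha
        · exact hb
        · exact block_closed h1 h2 h3 hBblock ha hb hab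
      refine Finset.eq_of_subset_of_card_le hsub2 ?_
      rw [blocks_card h1 h2 h3 hBblock]
      rw [Finset.card_eq_three.mpr ⟨a, b, star a b, hab,
        (star_ne_left h1 h2 h3 hab).symm, (star_ne_right h1 h2 h3 hab).symm, rfl⟩]
  have hcount := Finset.card_eq_sum_card_fiberwise hf
  rw [Finset.card_powersetCard, Finset.card_univ] at hcount
  have hsum : ∑ B ∈ Bl, ((Finset.univ.powersetCard 2).filter (fun P => f P = B)).card
      = 3 * Bl.card := by
    rw [Finset.sum_congr rfl (fun B hB => by
      rw [key B hB, Finset.card_powersetCard, blocks_card h1 h2 h3 ((hmemBl B).mp hB)])]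
    simp [mul_comm]
  rw [hsum] at hcount
  have hn : (blocksOf star).ncard = Bl.card :=
    Set.ncard_eq_toFinset_card _ (Set.toFinite _)
  omega

end

section
variable {X : Type*} [DecidableEq X] {star : X → X → X}
variable (h1 : ∀ a, star a a = a) (h2 : ∀ a b, star a b = star b a)
  (h3 : ∀ a b, star a (star a b) = b)

include h1 h2 h3

lemma BSet_eq : BSet star = ASet star ∪ blocksOf star := by
  ext B
  constructor
  · rintro ⟨a, b, c, hab, hac, hbc, rfl⟩
    by_cases h : ({a, b, c} : Finset X) ∈ blocksOf star
    · right
      have e1 : star a b = c := block_op h1 h2 h3 hab hac hbc h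
      have e2 : star b c = a := by
        refine block_op h1 h2 h3 hbc (Ne.symm hab) (Ne.symm hac) ?_
        have he : ({b, c, a} : Finset X) = {a, b, c} := by ext x; simp; tauto
        rw [he]; exact h
      have e3 : star c a = b := by
        refine block_op h1 h2 h3 (Ne.symm hac) (Ne.symm hbc) hab ?_
        have he : ({c, a, b} : Finset X) = {a, b, c} := by ext x; simp; tauto
        rw [he]; exact h
      rw [e1, e2, e3]
      have he : ({c, a, b} : Finset X) = {a, b, c} := by ext x; simp; tauto
      rw [he]; exact h
    · exact Or.inl ⟨a, b, c, hab, hac, hbc, h, rfl⟩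
  · rintro (⟨a, b, c, hab, hac, hbc, h, rfl⟩ | hB)
    · exact ⟨a, b, c, hab, hac, hbc, rfl⟩
    · obtain ⟨a, b, c, hab, hac, hbc, rfl, hm⟩ := hB
      have hblk : ({a, b, c} : Finset X) ∈ blocksOf star :=
        ⟨a, b, c, hab, hac, hbc, rfl, hm⟩
      have e2 : star b c = a := by
        refine block_op h1 h2 h3 hbc (Ne.symm hab) (Ne.symm hac) ?_
        have he : ({b, c, a} : Finset X) = {a, b, c} := by ext x; simp; tauto
        rw [he]; exact hblk
      have e3 : star c a = b := by
        refine block_op h1 h2 h3 (Ne.symm hac) (Ne.symm hbc) hab ?_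
        have he : ({c, a, b} : Finset X) = {a, b, c} := by ext x; simp; tauto
        rw [he]; exact hblk
      refine ⟨a, b, c, hab, hac, hbc, ?_⟩
      rw [hm, e2, e3]
      ext x; simp; tauto

lemma inter_nonempty_iff :
    (ASet star ∩ blocksOf star).Nonempty ↔ ¬ IsAntiPasch star := by
  constructor
  · rintro ⟨T, ⟨x, y, z, hxy, hxz, hyz, hnb, rfl⟩, hTb⟩ hap
    set u := star x y with hu
    set v := star y z with hv
    set w := star z x with hw
    have hux : u ≠ x := star_ne_left h1 h2 h3 hxy
    have huy : u ≠ y := star_ne_right h1 h2 h3 hxy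
    have huz : u ≠ z := fun h => hnb ⟨x, y, z, hxy, hxz, hyz, rfl, h⟩
    have hvy : v ≠ y := star_ne_left h1 h2 h3 hyz
    have hvz : v ≠ z := star_ne_right h1 h2 h3 hyz
    have hvx : v ≠ x := by
      intro h
      apply hnb
      have he : ({x, y, z} : Finset X) = {y, z, x} := by ext t; simp; tauto
      rw [he]
      exact ⟨y, z, x, hyz, Ne.symm hxy, Ne.symm hxz, rfl, h⟩
    have hwz : w ≠ z := star_ne_left h1 h2 h3 (Ne.symm hxz)
    have hwx : w ≠ x := star_ne_right h1 h2 h3 (Ne.symm hxz)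
    have hwy : w ≠ y := by
      intro h
      apply hnb
      have he : ({x, y, z} : Finset X) = {z, x, y} := by ext t; simp; tauto
      rw [he]
      exact ⟨z, x, y, Ne.symm hxz, Ne.symm hyz, hxy, rfl, h⟩
    have huv : u ≠ v := by
      intro h
      apply hxz
      have := congrArg (star y) h
      rw [hu, hv, h2 x y, h3, h3] at this
      exact this
    have hvw : v ≠ w := by
      intro h
      have := congrArg (star z) h
      rw [hv, hw, h2 y z, h3, h3] at this
      exact hxy this.symm
    have huw : u ≠ w := by
      intro h
      apply hyz
      have := congrArg (star x) h
      rw [hu, hw, h2 z x, h3, h3] at this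
      exact this
    have hop : star u v = w := block_op h1 h2 h3 huv huw hvw hTb
    have hpw : ([y, x, u, z, v, w] : List X).Pairwise (· ≠ ·) := by
      refine List.Pairwise.cons ?_ (List.Pairwise.cons ?_ (List.Pairwise.cons ?_
        (List.Pairwise.cons ?_ (List.Pairwise.cons ?_ (List.pairwise_singleton _ _)))))
      · intro t ht
        simp only [List.mem_cons, List.not_mem_nil, or_false, List.mem_singleton] at ht
        rcases ht with rfl | rfl | rfl | rfl | rfl
        exacts [hxy.symm, huy.symm, hyz, hvy.symm, hwy.symm]
      · intro t ht
        simp only [List.mem_cons, List.not_mem_nil, or_false, List.mem_singleton] at ht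
        rcases ht with rfl | rfl | rfl | rfl
        exacts [hux.symm, hxz, hvx.symm, hwx.symm]
      · intro t ht
        simp only [List.mem_cons, List.not_mem_nil, or_false, List.mem_singleton] at ht
        rcases ht with rfl | rfl | rfl
        exacts [huz, huv, huw]
      · intro t ht
        simp only [List.mem_cons, List.not_mem_nil, or_false, List.mem_singleton] at ht
        rcases ht with rfl | rfl
        exacts [hvz.symm, hwz.symm]
      · intro t ht
        simp only [List.mem_cons, List.not_mem_nil, or_false, List.mem_singleton] at ht
        rcases ht with rfl
        exact hvw
    apply hap ({({y, x, u} : Finset X), {y, z, v}, {w, x, z}, {w, u, v}})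
    · exact ⟨y, x, u, z, v, w, hpw, rfl⟩
    · intro Q hQ
      simp only [Set.mem_insert_iff, Set.mem_singleton_iff] at hQ
      rcases hQ with rfl | rfl | rfl | rfl
      · have he : ({y, x, u} : Finset X) = {x, y, u} := by ext t; simp; tauto
        rw [he]
        exact ⟨x, y, u, hxy, hux.symm, huy.symm, rfl, rfl⟩
      · exact ⟨y, z, v, hyz, hvy.symm, hvz.symm, rfl, rfl⟩
      · have he : ({w, x, z} : Finset X) = {z, x, w} := by ext t; simp; tauto
        rw [he]
        exact ⟨z, x, w, Ne.symm hxz, hwz.symm, hwx.symm, rfl, rfl⟩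
      · have he : ({w, u, v} : Finset X) = {u, v, w} := by ext t; simp; tauto
        rw [he]
        exact hTb
  · intro hap
    rw [IsAntiPasch] at hap
    push_neg at hap
    obtain ⟨P, ⟨a, b, c, d, e, f, hpw, rfl⟩, hsub⟩ := hap
    simp only [List.pairwise_cons, List.mem_cons, List.mem_singleton,
      List.not_mem_nil, List.Pairwise.nil] at hpw
    obtain ⟨H1, H2, H3, H4, H5, H6, -⟩ := hpw
    have hab : a ≠ b := H1 b (by simp)
    have hac : a ≠ c := H1 c (by simp)
    have had : a ≠ d := H1 d (by simp)
    have hae : a ≠ e := H1 e (by simp)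
    have haf : a ≠ f := H1 f (by simp)
    have hbc : b ≠ c := H2 c (by simp)
    have hbd : b ≠ d := H2 d (by simp)
    have hbe : b ≠ e := H2 e (by simp)
    have hbf : b ≠ f := H2 f (by simp)
    have hcd : c ≠ d := H3 d (by simp)
    have hce : c ≠ e := H3 e (by simp)
    have hcf : c ≠ f := H3 f (by simp)
    have hde : d ≠ e := H4 e (by simp)
    have hdf : d ≠ f := H4 f (by simp)
    have hef : e ≠ f := H5 f (by simp)
    have hB1 : ({a, b, c} : Finset X) ∈ blocksOf star := hsub (by simp)
    have hB2 : ({a, d, e} : Finset X) ∈ blocksOf star := hsub (by simp)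
    have hB3 : ({f, b, d} : Finset X) ∈ blocksOf star := hsub (by simp)
    have hB4 : ({f, c, e} : Finset X) ∈ blocksOf star := hsub (by simp)
    have e1 : star b a = c := by
      rw [h2]; exact block_op h1 h2 h3 hab hac hbc hB1
    have e2 : star a d = e := block_op h1 h2 h3 had hae hde hB2
    have e3 : star d b = f := by
      refine block_op h1 h2 h3 (Ne.symm hbd) hdf hbf ?_
      have he : ({d, b, f} : Finset X) = {f, b, d} := by ext t; simp; tauto
      rw [he]; exact hB3
    refine ⟨{star b a, star a d, star d b}, ⟨b, a, d, Ne.symm hab, hbd, had, ?_, rfl⟩, ?_⟩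
    · intro h
      have := block_op h1 h2 h3 (Ne.symm hab) hbd had h
      rw [e1] at this
      exact hcd this
    · rw [e1, e2, e3]
      have he : ({c, e, f} : Finset X) = {f, c, e} := by ext t; simp; tauto
      rw [he]; exact hB4

end


/-- `β(S) = α(S) + (1/3)·C(n,2)` iff `S` is anti-pasch. -/
theorem stmt8 {X : Type*} [Fintype X] [DecidableEq X]
    (star : X → X → X) (hq : IsSteinerQuasigroup star)
    (n : ℕ) (hcard : Fintype.card X = n) :
    3 * betaInv star = 3 * alphaInv star + n.choose 2 ↔ IsAntiPasch star := by
  obtain ⟨h1, h2, h3⟩ := hq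
  have hcount : 3 * (blocksOf star).ncard = n.choose 2 := by
    rw [← hcard]; exact count_blocks h1 h2 h3
  have hkey : (ASet star ∪ blocksOf star).ncard + (ASet star ∩ blocksOf star).ncard
      = (ASet star).ncard + (blocksOf star).ncard :=
    Set.ncard_union_add_ncard_inter _ _ (Set.toFinite _) (Set.toFinite _)
  have hbeta : betaInv star = (ASet star ∪ blocksOf star).ncard := by
    rw [betaInv, BSet_eq h1 h2 h3]
  rw [hbeta, alphaInv]
  constructor
  · intro h
    have h0 : (ASet star ∩ blocksOf star).ncard = 0 := by omega
    have hemp : ASet star ∩ blocksOf star = ∅ :=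
      (Set.ncard_eq_zero (Set.toFinite _)).mp h0
    by_contra hap
    obtain ⟨T, hT⟩ := (inter_nonempty_iff h1 h2 h3).mpr hap
    rw [hemp] at hT
    exact hT
  · intro hap
    have hemp : ASet star ∩ blocksOf star = ∅ := by
      by_contra h
      exact (inter_nonempty_iff h1 h2 h3).mp (Set.nonempty_iff_ne_empty.mpr h) hap
    rw [hemp, Set.ncard_empty] at hkey
    omega
end
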